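/- arXiv:2011.10323 — 2 statements merged into one kernel-verified Lean document; each statement's English description precedes it below -/
import Mathlib

section
/- Let M ≥ 1 and suppose y ∈ ℝ^M, x ∈ ℝ^{M+1} satisfy 1 ≥ x_1 ≥ y_1 ≥ x_2 ≥ y_2 ≥ ··· ≥ y_M ≥ x_{M+1} ≥ 0. Then ∏_{1≤i<j≤M} (y_i−x_{j+1})(y_i−y_j)^{-1}(x_i−y_j)(x_i−x_{j+1})^{-1} · ∏_{i=1}^M (y_i−x_{i+1})(x_i−y_i)(x_i−x_{i+1})^{-1} ≤ 1, whenever all the factors appearing with negative exponent are strictly positive. -/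
/-!
Group the factors of the weight by the column index `j`, the diagonal factor included. Shifting
the index, `∏_{i ≤ j} (xᵢ - y_j) = (x₁ - y_j) ∏_{i < j} (x_{i+1} - y_j)`, so column `j` equals
`∏_{i ≤ j} (yᵢ - x_{j+1}) / (xᵢ - x_{j+1}) · ∏_{i < j} (x_{i+1} - y_j) / (yᵢ - y_j) · (x₁ - y_j)`.
By interlacing every one of these factors lies in `[0, 1]`.
-/
open Finset

theorem Fin.prod_Iic_castSucc_eq_mul_prod_Iio_succ {M : Type*} [CommMonoid M] {n : ℕ}
    (f : Fin (n + 1) → M) (j : Fin n) :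
    ∏ i ∈ Iic j, f i.castSucc = f 0 * ∏ i ∈ Iio j, f i.succ := by
  have h : Iic j.castSucc = insert 0 (Ioo 0 j.succ) := by
    ext k
    cases k using Fin.cases <;> simp [Fin.succ_le_castSucc_iff, Fin.succ_pos]
  rw [← Fin.prod_Iic_castSucc, h, prod_insert (by simp), ← Fin.map_succEmb_Iio, prod_map]
  rfl

theorem sub_div_sub_mem_unitInterval {p q r : ℝ} (hrp : r ≤ p) (hpq : p ≤ q) :
    (p - r) / (q - r) ∈ unitInterval :=
  ⟨div_nonneg (sub_nonneg.2 hrp) (sub_nonneg.2 (hrp.trans hpq)),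
    div_le_one_of_le₀ (sub_le_sub_right hpq r) (sub_nonneg.2 (hrp.trans hpq))⟩

section Interlacing

variable {K : Type*} [Field K] {M : ℕ}

def interlacingColumn (x : Fin (M + 1) → K) (y : Fin M → K) (j : Fin M) : K :=
  (∏ i ∈ Iio j, (y i - x j.succ) * (y i - y j)⁻¹ * (x i.castSucc - y j) *
      (x i.castSucc - x j.succ)⁻¹) *
    ((y j - x j.succ) * (x j.castSucc - y j) * (x j.castSucc - x j.succ)⁻¹)

theorem prod_interlacingColumn (x : Fin (M + 1) → K) (y : Fin M → K) :
    ∏ j, interlacingColumn x y j =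
      (∏ i : Fin M, ∏ j ∈ Ioi i,
        (y i - x j.succ) * (y i - y j)⁻¹ * (x i.castSucc - y j) *
          (x i.castSucc - x j.succ)⁻¹) *
      ∏ i : Fin M,
        (y i - x i.succ) * (x i.castSucc - y i) * (x i.castSucc - x i.succ)⁻¹ := by
  unfold interlacingColumn
  rw [prod_mul_distrib]
  congr 1
  exact prod_comm' fun j i => by simp

theorem interlacingColumn_eq (x : Fin (M + 1) → K) (y : Fin M → K) (j : Fin M) :
    interlacingColumn x y j =
      (∏ i ∈ Iic j, (y i - x j.succ) / (x i.castSucc - x j.succ)) *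
        (∏ i ∈ Iio j, (x i.succ - y j) / (y i - y j)) * (x 0 - y j) := by
  have hshift := Fin.prod_Iic_castSucc_eq_mul_prod_Iio_succ (fun k => x k - y j) j
  rw [Iic_eq_cons_Iio, prod_cons] at hshift
  rw [interlacingColumn, Iic_eq_cons_Iio, prod_cons]
  simp only [div_eq_mul_inv, prod_mul_distrib] at hshift ⊢
  linear_combination (y j - x j.succ) * (x j.castSucc - x j.succ)⁻¹ *
    (∏ i ∈ Iio j, (y i - x j.succ)) * (∏ i ∈ Iio j, (y i - y j)⁻¹) *
    (∏ i ∈ Iio j, (x i.castSucc - x j.succ)⁻¹) * hshift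

variable {x : Fin (M + 1) → ℝ} {y : Fin M → ℝ}

theorem antitone_of_interlacing (h : ∀ i : Fin M, x i.castSucc ≥ y i ∧ y i ≥ x i.succ) :
    Antitone x :=
  Fin.antitone_iff_succ_le.2 fun i => (h i).2.trans (h i).1

theorem interlacingColumn_mem_unitInterval (hx1 : x 0 ≤ 1) (hx0 : 0 ≤ x (Fin.last M))
    (h : ∀ i : Fin M, x i.castSucc ≥ y i ∧ y i ≥ x i.succ) (j : Fin M) :
    interlacingColumn x y j ∈ unitInterval := by
  have hx := antitone_of_interlacing h
  rw [interlacingColumn_eq]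
  refine unitInterval.mul_mem (unitInterval.mul_mem ?_ ?_) ?_
  · refine unitInterval.prod_mem fun i hi => sub_div_sub_mem_unitInterval ?_ (h i).1
    exact (hx (Fin.succ_le_succ_iff.2 (mem_Iic.1 hi))).trans (h i).2
  · refine unitInterval.prod_mem fun i hi => sub_div_sub_mem_unitInterval ?_ (h i).2
    exact (h j).1.trans (hx (Fin.succ_le_castSucc_iff.2 (mem_Iio.1 hi)))
  · have hyx : y j ≤ x 0 := (h j).1.trans (hx (Fin.zero_le _))
    have hy0 : 0 ≤ y j := hx0.trans ((hx (Fin.le_last _)).trans (h j).2)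
    exact ⟨sub_nonneg.2 hyx, by linarith⟩

end Interlacing

theorem interlacing_weight_le_one_general (M : ℕ)
    (y : Fin M → ℝ) (x : Fin (M + 1) → ℝ)
    (hx1 : x 0 ≤ 1) (hx0 : 0 ≤ x (Fin.last M))
    (hinter : ∀ i : Fin M, x i.castSucc ≥ y i ∧ y i ≥ x i.succ) :
    (∏ i : Fin M, ∏ j ∈ Finset.Ioi i,
        (y i - x j.succ) * (y i - y j)⁻¹ * (x i.castSucc - y j) *
          (x i.castSucc - x j.succ)⁻¹) *
      ∏ i : Fin M,
        (y i - x i.succ) * (x i.castSucc - y i) * (x i.castSucc - x i.succ)⁻¹ ≤ 1 := by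
  rw [← prod_interlacingColumn]
  exact (unitInterval.prod_mem fun j _ =>
    interlacingColumn_mem_unitInterval hx1 hx0 hinter j).2

/-- For strictly interlacing sequences `1 ≥ x₁ > y₁ > x₂ > ⋯ > y_M > x_{M+1} ≥ 0`
(so that all denominators below are strictly positive), the product
`∏_{i<j≤M} (yᵢ−x_{j+1})(yᵢ−y_j)⁻¹(xᵢ−y_j)(xᵢ−x_{j+1})⁻¹ ·
 ∏_{i=1}^M (yᵢ−x_{i+1})(xᵢ−yᵢ)(xᵢ−x_{i+1})⁻¹` is at most `1`. -/
theorem interlacing_weight_le_one (M : ℕ) (hM : 1 ≤ M)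
    (y : Fin M → ℝ) (x : Fin (M + 1) → ℝ)
    (hx1 : x 0 ≤ 1) (hx0 : 0 ≤ x (Fin.last M))
    (hinter : ∀ i : Fin M, x i.castSucc ≥ y i ∧ y i ≥ x i.succ)
    (hy : ∀ i j : Fin M, i < j → y j < y i)
    (hx : ∀ i j : Fin (M + 1), i < j → x j < x i) :
    (∏ i : Fin M, ∏ j ∈ Finset.Ioi i,
        (y i - x j.succ) * (y i - y j)⁻¹ * (x i.castSucc - y j) *
          (x i.castSucc - x j.succ)⁻¹) *
      ∏ i : Fin M,
        (y i - x i.succ) * (x i.castSucc - y i) * (x i.castSucc - x i.succ)⁻¹ ≤ 1 :=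
  interlacing_weight_le_one_general M y x hx1 hx0 hinter
end

section
/- Let q ∈ ℕ, q ≥ 1, and β ≥ 4q². Then the integral ∫ over {x ∈ [0,1]^{2q} : x_1 ≥ ··· ≥ x_{2q}, ∑_{i=1}^{2q} x_i = q} of ∏_{1≤i<j≤2q}(x_i−x_j)^{4/β} ∏_{i=1}^{2q}[x_i(1−x_i)]^{2/β−1} (with respect to (2q−1)-dimensional Lebesgue measure on the hyperplane ∑x_i = q) is infinite. -/
open MeasureTheory Filter Topology Finset Metric
open scoped ENNReal

/-!
Near the vertex `(1,…,1,0,…,0)` with `q` ones, take points whose coordinates stay at distance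
`≍ t` from `{0,1}` and `≳ t` from each other. There the integrand is at least
`K t^(4q(q-1)/β) · t^(2q(2/β-1)) = K t^(4q²/β - 2q) ≥ K t^(1-2q)`: only the `q(q-1)` pairs inside
each half have small differences. These points contain a box of volume `≍ t^(2q-1)` in the
hyperplane coordinates, so the integral over the box stays bounded below as `t → 0` while its
volume tends to `0`, which absolute continuity forbids for a finite integral.
-/

theorem setLIntegral_eq_top_of_tendsto_measure {α ι : Type*} [MeasurableSpace α]
    {μ : Measure α} {f : α → ℝ≥0∞} {S : Set α} {s : ι → Set α} {l : Filter ι} [l.NeBot]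
    {C : ℝ≥0∞} (hC : C ≠ 0) (hs : ∀ᶠ i in l, s i ⊆ S ∧ C ≤ ∫⁻ x in s i, f x ∂μ)
    (hμ : Tendsto (μ ∘ s) l (𝓝 0)) : ∫⁻ x in S, f x ∂μ = ⊤ := by
  by_contra hS
  have hμS : Tendsto (μ.restrict S ∘ s) l (𝓝 0) :=
    tendsto_of_tendsto_of_tendsto_of_le_of_le tendsto_const_nhds hμ
      (fun _ => zero_le) (fun i => Measure.restrict_apply_le _ _)
  refine hC (le_antisymm (ge_of_tendsto (tendsto_setLIntegral_zero hS hμS) ?_) zero_le)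
  filter_upwards [hs] with i ⟨hsub, hle⟩
  rwa [Measure.restrict_restrict_of_subset hsub]

theorem tendsto_volume_pi_closedBall {α ι : Type*} [Fintype ι] [Nonempty ι] {l : Filter α}
    (c : α → ι → ℝ) {ρ : α → ℝ} (hρ : Tendsto ρ l (𝓝 0)) (hρ0 : ∀ᶠ a in l, 0 ≤ ρ a) :
    Tendsto (fun a => volume (closedBall (c a) (ρ a))) l (𝓝 0) := by
  have hlim : Tendsto (fun a => (2 * ρ a) ^ Fintype.card ι) l (𝓝 0) := by
    simpa [Fintype.card_ne_zero] using (hρ.const_mul 2).pow (Fintype.card ι)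
  refine (ENNReal.ofReal_zero ▸ ENNReal.tendsto_ofReal hlim).congr' ?_
  filter_upwards [hρ0] with a ha
  exact (Real.volume_pi_closedBall _ ha).symm

def hyperplaneLift (n : ℕ) (s : ℝ) (y : Fin (n - 1) → ℝ) : Fin n → ℝ :=
  fun i => if h : (i : ℕ) < n - 1 then y ⟨i, h⟩ else s - ∑ j, y j

theorem dist_hyperplaneLift_le (n : ℕ) (s : ℝ) (y y' : Fin (n - 1) → ℝ) :
    dist (hyperplaneLift n s y) (hyperplaneLift n s y') ≤ n * dist y y' := by
  have hn : ((n - 1 : ℕ) : ℝ) ≤ n := Nat.cast_le.2 (Nat.sub_le n 1)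
  refine (dist_pi_le_iff (by positivity)).2 fun i => ?_
  simp only [hyperplaneLift]
  split_ifs with h
  · have h1 : (1 : ℝ) ≤ n := by exact_mod_cast (by omega : 1 ≤ n)
    exact (dist_le_pi_dist y y' _).trans (le_mul_of_one_le_left dist_nonneg h1)
  · calc dist (s - ∑ j, y j) (s - ∑ j, y' j) = |∑ j, (y' j - y j)| := by
          rw [Real.dist_eq, sum_sub_distrib]; congr 1; ring
      _ ≤ ∑ j, |y' j - y j| := abs_sum_le_sum_abs _ _
      _ ≤ ∑ _j : Fin (n - 1), dist y y' := sum_le_sum fun j _ => by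
          rw [← Real.dist_eq, dist_comm]; exact dist_le_pi_dist y y' j
      _ ≤ n * dist y y' := by
          rw [sum_const, card_univ, Fintype.card_fin, nsmul_eq_mul]
          exact mul_le_mul_of_nonneg_right hn dist_nonneg

theorem hyperplaneLift_eq {n : ℕ} (hn : 1 ≤ n) {s : ℝ} {c : ℕ → ℝ}
    (hc : ∑ k ∈ range n, c k = s) : hyperplaneLift n s (fun j => c j) = fun i : Fin n => c i := by
  obtain ⟨m, rfl⟩ : ∃ m, n = m + 1 := ⟨n - 1, by omega⟩
  funext i
  simp only [hyperplaneLift]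
  split_ifs with h
  · rfl
  · rw [← hc, Fin.sum_univ_eq_sum_range c, Nat.add_sub_cancel, sum_range_succ,
      add_sub_cancel_left, show (i : ℕ) = m by omega]

-- for `i < j`, the condition `j < q ∨ q ≤ i` says that `i` and `j` lie in the same half
theorem sum_card_filter_Ioi_sameHalf (q : ℕ) :
    ∑ i : Fin (2 * q), #((Ioi i).filter fun j : Fin (2 * q) => (j : ℕ) < q ∨ q ≤ (i : ℕ)) =
      q * (q - 1) := by
  have hcard : ∀ i : Fin (2 * q),
      #((Ioi i).filter fun j : Fin (2 * q) => (j : ℕ) < q ∨ q ≤ (i : ℕ)) =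
        (if (i : ℕ) < q then q else 2 * q) - 1 - i := by
    intro i
    split_ifs with hi
    · have hIoo : (Ioi i).filter (fun j : Fin (2 * q) => (j : ℕ) < q ∨ q ≤ (i : ℕ)) =
          Ioo i ⟨q, by omega⟩ := by
        ext j; simp only [mem_filter, mem_Ioi, mem_Ioo, Fin.lt_def]; omega
      rw [hIoo, Fin.card_Ioo]
      dsimp only; omega
    · rw [filter_true_of_mem fun j _ => Or.inr (not_lt.1 hi), Fin.card_Ioi]
  rw [sum_congr rfl fun i _ => hcard i,
    Fin.sum_univ_eq_sum_range (fun k => (if k < q then q else 2 * q) - 1 - k), two_mul,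
    sum_range_add]
  have hlow : ∑ k ∈ range q, ((if k < q then q else q + q) - 1 - k) = ∑ k ∈ range q, k := by
    rw [← sum_range_reflect]
    exact sum_congr rfl fun k hk => by have := mem_range.1 hk; split_ifs <;> omega
  have hhigh : ∑ k ∈ range q, ((if q + k < q then q else q + q) - 1 - (q + k))
      = ∑ k ∈ range q, k := by
    rw [← sum_range_reflect]
    exact sum_congr rfl fun k hk => by have := mem_range.1 hk; split_ifs <;> omega
  rw [hlow, hhigh]
  have := sum_range_id_mul_two q
  omega

theorem exists_vandermonde_rpow_ge (q : ℕ) {p : ℝ} (hp : 0 ≤ p) :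
    ∃ K > 0, ∀ δ > 0, ∀ x : Fin (2 * q) → ℝ, (∀ i j, i < j → δ ≤ x i - x j) →
      (∀ i j : Fin (2 * q), (i : ℕ) < q → q ≤ (j : ℕ) → 1 / 2 ≤ x i - x j) →
      K * (δ ^ p) ^ (q * (q - 1)) ≤ ∏ i, ∏ j ∈ Ioi i, (x i - x j) ^ p := by
  let sameHalf (i j : Fin (2 * q)) : Prop := (j : ℕ) < q ∨ q ≤ (i : ℕ)
  refine ⟨((1 / 2 : ℝ) ^ p) ^ ∑ i : Fin (2 * q), #((Ioi i).filter fun j => ¬sameHalf i j),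
    by positivity, fun δ hδ x hgap hcross => ?_⟩
  calc ((1 / 2 : ℝ) ^ p) ^ (∑ i : Fin (2 * q), #((Ioi i).filter fun j => ¬sameHalf i j)) *
        (δ ^ p) ^ (q * (q - 1))
      = ∏ i, ∏ j ∈ Ioi i, if sameHalf i j then δ ^ p else (1 / 2 : ℝ) ^ p := by
        simp only [prod_ite, prod_const, prod_mul_distrib, prod_pow_eq_pow_sum,
          sameHalf, sum_card_filter_Ioi_sameHalf, mul_comm]
    _ ≤ ∏ i, ∏ j ∈ Ioi i, (x i - x j) ^ p := by
        refine prod_le_prod (fun i _ => prod_nonneg fun j _ => by split_ifs <;> positivity)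
          fun i _ => prod_le_prod (fun j _ => by split_ifs <;> positivity) fun j hj => ?_
        have hij := mem_Ioi.1 hj
        split_ifs with hsame
        · exact Real.rpow_le_rpow hδ.le (hgap i j hij) hp
        · simp only [sameHalf, not_or, not_lt, not_le] at hsame
          exact Real.rpow_le_rpow (by norm_num) (hcross i j hsame.2 hsame.1) hp

structure NearVertex (q : ℕ) (t : ℝ) (x : Fin (2 * q) → ℝ) : Prop where
  gap : ∀ i j, i < j → t / 2 ≤ x i - x j
  cross_gap : ∀ i j : Fin (2 * q), (i : ℕ) < q → q ≤ (j : ℕ) → 1 / 2 ≤ x i - x j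
  edge : ∀ i, 0 < x i * (1 - x i) ∧ x i * (1 - x i) ≤ (q + 1) * t

namespace NearVertex

variable {q : ℕ} {t : ℝ} {x : Fin (2 * q) → ℝ}

theorem mem_Icc (h : NearVertex q t x) (i : Fin (2 * q)) : x i ∈ Set.Icc (0 : ℝ) 1 := by
  have := (h.edge i).1
  constructor <;> nlinarith

theorem antitone (h : NearVertex q t x) : Antitone x := by
  intro i j hij
  obtain rfl | hlt := hij.eq_or_lt
  · exact le_rfl
  · have := h.gap i j hlt
    have := h.edge i
    nlinarith

end NearVertex

noncomputable def selbergIntegrand (β : ℝ) {n : ℕ} (x : Fin n → ℝ) : ℝ :=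
  (∏ i, ∏ j ∈ Ioi i, (x i - x j) ^ (4 / β)) * ∏ i, (x i * (1 - x i)) ^ (2 / β - 1)

theorem exists_selbergIntegrand_ge {q : ℕ} (hq : 1 ≤ q) {β : ℝ} (hβ : 4 * (q : ℝ) ^ 2 ≤ β) :
    ∃ K > 0, ∀ t, 0 < t → t ≤ 1 → ∀ x, NearVertex q t x →
      K * t ^ (1 - 2 * q : ℝ) ≤ selbergIntegrand β x := by
  have hq1 : (1 : ℝ) ≤ q := by exact_mod_cast hq
  have hβ0 : 0 < β := by nlinarith
  set p := 4 / β
  set r := 2 / β - 1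
  set N := q * (q - 1)
  have hr : r ≤ 0 := by
    have : 2 / β ≤ 1 := (div_le_one hβ0).2 (by nlinarith)
    linarith
  -- the exponent of `t` is `4q²/β - 2q`, which is `≤ 1 - 2q` exactly when `4q² ≤ β`
  have hexp : p * N + r * (2 * q : ℕ) ≤ 1 - 2 * q := by
    have h1 : 4 * (q : ℝ) ^ 2 / β ≤ 1 := (div_le_one hβ0).2 hβ
    have h2 : p * N + r * (2 * q : ℕ) = 4 * (q : ℝ) ^ 2 / β - 2 * q := by
      simp only [p, r, N]; push_cast [Nat.cast_sub hq]; field_simp; ring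
    linarith
  obtain ⟨K₁, hK₁, hV⟩ := exists_vandermonde_rpow_ge q (p := p) (by positivity)
  refine ⟨K₁ / (2 ^ p) ^ N * (((q : ℝ) + 1) ^ r) ^ (2 * q), by positivity,
    fun t ht ht1 x hx => ?_⟩
  have hVx := hV (t / 2) (by positivity) x hx.gap hx.cross_gap
  have hPx : (((q + 1) * t) ^ r) ^ (2 * q) ≤ ∏ i, (x i * (1 - x i)) ^ r := by
    calc (((q + 1) * t) ^ r) ^ (2 * q) = ∏ _i : Fin (2 * q), ((q + 1) * t) ^ r := by
          rw [prod_const, card_univ, Fintype.card_fin]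
      _ ≤ ∏ i, (x i * (1 - x i)) ^ r := prod_le_prod (fun _ _ => by positivity)
          fun i _ => Real.rpow_le_rpow_of_nonpos (hx.edge i).1 (hx.edge i).2 hr
  calc K₁ / (2 ^ p) ^ N * (((q : ℝ) + 1) ^ r) ^ (2 * q) * t ^ (1 - 2 * q : ℝ)
      ≤ K₁ / (2 ^ p) ^ N * (((q : ℝ) + 1) ^ r) ^ (2 * q) * t ^ (p * N + r * (2 * q : ℕ)) :=
        mul_le_mul_of_nonneg_left (Real.rpow_le_rpow_of_exponent_ge ht ht1 hexp) (by positivity)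
    _ = K₁ * ((t / 2) ^ p) ^ N * (((q + 1) * t) ^ r) ^ (2 * q) := by
        rw [Real.rpow_add ht, Real.rpow_mul_natCast ht.le, Real.rpow_mul_natCast ht.le,
          Real.div_rpow ht.le zero_le_two, Real.mul_rpow (by positivity) ht.le, div_pow]
        ring
    _ ≤ selbergIntegrand β x :=
        mul_le_mul hVx hPx (by positivity) ((by positivity : (0 : ℝ) ≤ _).trans hVx)

-- `(1 - t, 1 - 2t, …, 1 - qt, qt, …, 2t, t)`, tending to the most singular vertex as `t → 0`
def approachPoint (q : ℕ) (t : ℝ) (k : ℕ) : ℝ :=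
  if k < q then 1 - (k + 1) * t else (2 * q - k) * t

theorem sum_range_approachPoint (q : ℕ) (t : ℝ) :
    ∑ k ∈ range (2 * q), approachPoint q t k = q := by
  have htop : ∀ k ∈ range q, approachPoint q t k = 1 - (k + 1) * t := fun k hk =>
    if_pos (mem_range.1 hk)
  have hbot : ∀ k ∈ range q, approachPoint q t (q + k) = (q - k) * t := fun k _ => by
    rw [approachPoint, if_neg (by omega)]; push_cast; ring
  have hreflect : ∑ k ∈ range q, ((q : ℝ) - k) = ∑ k ∈ range q, ((k : ℝ) + 1) := by
    rw [← sum_range_reflect]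
    refine sum_congr rfl fun k hk => ?_
    have hk : k < q := mem_range.1 hk
    rw [Nat.cast_sub (by omega), Nat.cast_sub (by omega)]
    push_cast; ring
  rw [two_mul, sum_range_add, sum_congr rfl htop, sum_congr rfl hbot, sum_sub_distrib,
    ← sum_mul, ← sum_mul, hreflect, sum_const, card_range, nsmul_eq_mul, mul_one]
  ring

theorem approachPoint_sub_approachPoint_ge {q : ℕ} {t : ℝ} (ht : 0 ≤ t)
    (htq : (2 * q + 1) * t ≤ 1) {i j : ℕ} (hij : i < j) :
    t ≤ approachPoint q t i - approachPoint q t j := by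
  have hij' : (i : ℝ) + 1 ≤ j := by exact_mod_cast hij
  simp only [approachPoint]
  split_ifs with hi hj hj
  · nlinarith
  · nlinarith
  · omega
  · nlinarith

namespace NearVertex

variable {q : ℕ} {t : ℝ} {x : Fin (2 * q) → ℝ}

theorem of_dist_le (ht : 0 < t) (htq : (q + 1) * t ≤ 1 / 4)
    (hx : dist x (fun i => approachPoint q t i) ≤ t / 4) : NearVertex q t x := by
  have hclose : ∀ i, |x i - approachPoint q t i| ≤ t / 4 := fun i =>
    (Real.dist_eq _ _ ▸ dist_le_pi_dist x _ i).trans hx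
  have htop : ∀ i : Fin (2 * q), (i : ℕ) < q →
      1 - (q + 1 / 4) * t ≤ x i ∧ x i ≤ 1 - 3 * t / 4 := by
    intro i hi
    have hi' : (i : ℝ) + 1 ≤ q := by exact_mod_cast hi
    have := abs_le.1 (hclose i)
    rw [approachPoint, if_pos hi] at this
    constructor <;> nlinarith
  have hbot : ∀ i : Fin (2 * q), q ≤ (i : ℕ) → 3 * t / 4 ≤ x i ∧ x i ≤ (q + 1 / 4) * t := by
    intro i hi
    have hi' : (q : ℝ) ≤ i := by exact_mod_cast hi
    have hi'' : (i : ℝ) + 1 ≤ 2 * q := by exact_mod_cast (by omega : (i : ℕ) + 1 ≤ 2 * q)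
    have := abs_le.1 (hclose i)
    rw [approachPoint, if_neg (by omega)] at this
    constructor <;> nlinarith
  refine ⟨fun i j hij => ?_, fun i j hi hj => ?_, fun i => ?_⟩
  · have hsep :=
      approachPoint_sub_approachPoint_ge (q := q) ht.le (by linarith) (Fin.lt_def.1 hij)
    have := abs_le.1 (hclose i)
    have := abs_le.1 (hclose j)
    linarith
  · linarith [(htop i hi).1, (hbot j hj).2]
  · by_cases hi : (i : ℕ) < q
    · obtain ⟨hlo, hhi⟩ := htop i hi
      refine ⟨mul_pos (by linarith) (by linarith), ?_⟩
      nlinarith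
    · obtain ⟨hlo, hhi⟩ := hbot i (by omega)
      refine ⟨mul_pos (by linarith) (by linarith), ?_⟩
      nlinarith

theorem hyperplaneLift_of_mem_closedBall (hq : 1 ≤ q) (ht : 0 < t)
    (htq : (q + 1) * t ≤ 1 / 4) {y : Fin (2 * q - 1) → ℝ}
    (hy : y ∈ closedBall (fun j : Fin (2 * q - 1) => approachPoint q t j) (t / (8 * q))) :
    NearVertex q t (hyperplaneLift (2 * q) q y) := by
  have hq0 : (0 : ℝ) < q := Nat.cast_pos.2 hq
  refine NearVertex.of_dist_le ht htq ?_
  calc dist (hyperplaneLift (2 * q) q y) (fun i => approachPoint q t i)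
      = dist (hyperplaneLift (2 * q) q y)
          (hyperplaneLift (2 * q) q fun j => approachPoint q t j) := by
        rw [hyperplaneLift_eq (by omega) (sum_range_approachPoint q t)]
    _ ≤ (2 * q : ℕ) * (t / (8 * q)) :=
        (dist_hyperplaneLift_le _ _ _ _).trans
          (mul_le_mul_of_nonneg_left (mem_closedBall.1 hy) (by positivity))
    _ = t / 4 := by push_cast; field_simp; ring

end NearVertex

theorem le_setLIntegral_closedBall_approachPoint {q : ℕ} (hq : 1 ≤ q)
    {f : (Fin (2 * q) → ℝ) → ℝ} {K t : ℝ} (hK : 0 ≤ K) (ht : 0 < t) (htq : (q + 1) * t ≤ 1 / 4)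
    (hf : ∀ x, NearVertex q t x → K * t ^ (1 - 2 * q : ℝ) ≤ f x) :
    ENNReal.ofReal (K * (1 / (4 * q)) ^ (2 * q - 1)) ≤
      ∫⁻ y in closedBall (fun j : Fin (2 * q - 1) => approachPoint q t j) (t / (8 * q)),
        ENNReal.ofReal (f (hyperplaneLift (2 * q) q y)) := by
  have hq0 : (0 : ℝ) < q := Nat.cast_pos.2 hq
  have htpow : t ^ (1 - 2 * q : ℝ) * t ^ (2 * q - 1) = 1 := by
    rw [← Real.rpow_natCast, ← Real.rpow_add ht, Nat.cast_sub (by omega)]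
    norm_num
  calc ENNReal.ofReal (K * (1 / (4 * q)) ^ (2 * q - 1))
      = ENNReal.ofReal (K * t ^ (1 - 2 * q : ℝ)) *
          volume (closedBall (fun j : Fin (2 * q - 1) => approachPoint q t j) (t / (8 * q))) := by
        rw [Real.volume_pi_closedBall _ (by positivity), ← ENNReal.ofReal_mul (by positivity),
          Fintype.card_fin, show 2 * (t / (8 * q)) = t * (1 / (4 * q)) by field_simp; ring,
          mul_pow]
        congr 1
        linear_combination (-(K * (1 / (4 * q)) ^ (2 * q - 1))) * htpow
    _ = ∫⁻ _ in closedBall (fun j : Fin (2 * q - 1) => approachPoint q t j) (t / (8 * q)),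
          ENNReal.ofReal (K * t ^ (1 - 2 * q : ℝ)) := (setLIntegral_const _ _).symm
    _ ≤ _ := setLIntegral_mono' measurableSet_closedBall fun y hy =>
        ENNReal.ofReal_le_ofReal (hf _ (.hyperplaneLift_of_mem_closedBall hq ht htq hy))

/-- For `q ≥ 1` and `β ≥ 4q²`, the integral over
`{x ∈ [0,1]^{2q} : x₁ ≥ ⋯ ≥ x_{2q}, ∑ xᵢ = q}` of
`∏_{i<j}(xᵢ−x_j)^{4/β} ∏_i [xᵢ(1−xᵢ)]^{2/β−1}`, with respect to the
`(2q−1)`-dimensional Lebesgue measure on the hyperplane (parametrized by the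
first `2q−1` coordinates, the last being determined by the sum constraint),
is infinite. -/
theorem constrained_integral_eq_top (q : ℕ) (hq : 1 ≤ q) (β : ℝ)
    (hβ : 4 * (q : ℝ) ^ 2 ≤ β)
    (X : (Fin (2 * q - 1) → ℝ) → Fin (2 * q) → ℝ)
    (hX : ∀ y i, X y i =
      if h : (i : ℕ) < 2 * q - 1 then y ⟨i, h⟩ else (q : ℝ) - ∑ j, y j) :
    ∫⁻ y in {y : Fin (2 * q - 1) → ℝ |
        (∀ i, X y i ∈ Set.Icc (0 : ℝ) 1) ∧
          ∀ i j : Fin (2 * q), i ≤ j → X y j ≤ X y i},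
      ENNReal.ofReal
        ((∏ i : Fin (2 * q), ∏ j ∈ Finset.Ioi i, (X y i - X y j) ^ (4 / β)) *
          ∏ i : Fin (2 * q), (X y i * (1 - X y i)) ^ (2 / β - 1)) = ⊤ := by
  obtain rfl : X = hyperplaneLift (2 * q) q := funext fun y => funext (hX y)
  obtain ⟨K, hK, hf⟩ := exists_selbergIntegrand_ge hq hβ
  have hq0 : (0 : ℝ) < q := Nat.cast_pos.2 hq
  have : NeZero (2 * q - 1) := ⟨by omega⟩
  refine setLIntegral_eq_top_of_tendsto_measure (l := 𝓝[>] 0)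
    (C := ENNReal.ofReal (K * (1 / (4 * q)) ^ (2 * q - 1)))
    (s := fun t => closedBall (fun j => approachPoint q t j) (t / (8 * q)))
    (ENNReal.ofReal_pos.2 (by positivity)).ne' ?_ ?_
  · filter_upwards [Ioc_mem_nhdsGT (by positivity : (0 : ℝ) < 1 / (4 * (q + 1)))]
      with t ⟨ht, htq⟩
    have htq' : (q + 1) * t ≤ 1 / 4 := by
      rw [le_div_iff₀ (by positivity)] at htq; linarith
    refine ⟨fun y hy => ?_, le_setLIntegral_closedBall_approachPoint (f := selbergIntegrand β) hq
      hK.le ht htq' fun x hx => hf t ht (by nlinarith) x hx⟩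
    have hx := NearVertex.hyperplaneLift_of_mem_closedBall hq ht htq' hy
    exact ⟨hx.mem_Icc, hx.antitone⟩
  · refine tendsto_volume_pi_closedBall _ ?_
      (eventually_mem_nhdsWithin.mono fun t (ht : 0 < t) => by positivity)
    simpa using ((continuous_id.div_const (8 * (q : ℝ))).tendsto 0).mono_left
      (nhdsWithin_le_nhds (s := Set.Ioi 0))
end
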